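/- arXiv:2002.01498 — 2 statements merged into one kernel-verified Lean document; each statement's English description precedes it below -/
import Mathlib

section
/- Let F be a k-regular graph on r vertices and H an n-vertex blow-up of F all of whose vertex classes have size at least x. If |N(Z)| ≤ s for every vertex class Z of H, then e(H) ≤ ns/2 − x(rs − kn)/2. -/
open Finset

/-- The blow-up of a graph `F` with class sizes given by `w`. -/
def SimpleGraph.blowup {α : Type*} (F : SimpleGraph α) (w : α → ℕ) :
    SimpleGraph (Σ a, Fin (w a)) where
  Adj x y := F.Adj x.1 y.1
  symm := ⟨fun _ _ h => F.adj_symm h⟩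
  loopless := ⟨fun x h => F.irrefl h⟩

/-! Double counting: `2 e(H) = ∑_a w_a d_a` with `d_a = ∑_{b ∼ a} w_b ≤ s`, and regularity of `F`
gives `∑_a d_a = k n`. Writing `w_a d_a = (w_a - x) d_a + x d_a` and bounding `d_a ≤ s` in the first
term yields `2 e(H) ≤ (n - r x) s + x k n`. -/

theorem Finset.sum_mul_le_sum_mul_sub {ι R : Type*} [CommRing R] [LinearOrder R]
    [IsStrictOrderedRing R] (t : Finset ι) (w d : ι → R) {x c : R}
    (hw : ∀ i ∈ t, x ≤ w i) (hd : ∀ i ∈ t, d i ≤ c) :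
    ∑ i ∈ t, w i * d i ≤ (∑ i ∈ t, w i) * c - x * (#t * c - ∑ i ∈ t, d i) := by
  have h : ∑ i ∈ t, (w i - x) * d i ≤ ∑ i ∈ t, (w i - x) * c :=
    sum_le_sum fun i hi => mul_le_mul_of_nonneg_left (hd i hi) (sub_nonneg.2 (hw i hi))
  simp only [sub_mul, sum_sub_distrib, ← mul_sum, ← sum_mul, sum_const, nsmul_eq_mul] at h
  linarith

namespace SimpleGraph

variable {α : Type*} [Fintype α] (F : SimpleGraph α) [DecidableRel F.Adj]

theorem sum_sum_neighborFinset {M : Type*} [AddCommMonoid M] (f : α → M) :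
    ∑ a, ∑ b ∈ F.neighborFinset a, f b = ∑ b, F.degree b • f b := by
  rw [sum_comm' (t' := univ) (s' := fun b => F.neighborFinset b) fun a b => by
    simp [mem_neighborFinset, adj_comm]]
  simp [sum_const, card_neighborFinset_eq_degree]

theorem IsRegularOfDegree.sum_sum_neighborFinset {M : Type*} [AddCommMonoid M] {k : ℕ}
    (hreg : F.IsRegularOfDegree k) (f : α → M) :
    ∑ a, ∑ b ∈ F.neighborFinset a, f b = k • ∑ b, f b := by
  simp [F.sum_sum_neighborFinset, hreg.degree_eq, smul_sum]

variable (w : α → ℕ) [DecidableRel (F.blowup w).Adj]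

theorem neighborFinset_blowup (v : Σ a, Fin (w a)) :
    (F.blowup w).neighborFinset v = (F.neighborFinset v.1).sigma fun _ => univ := by
  ext y
  simp only [mem_neighborFinset, mem_sigma, mem_univ, and_true]
  rfl

theorem degree_blowup (a : α) (i : Fin (w a)) :
    (F.blowup w).degree ⟨a, i⟩ = ∑ b ∈ F.neighborFinset a, w b := by
  simp [← card_neighborFinset_eq_degree, neighborFinset_blowup]

theorem two_mul_card_edgeFinset_blowup :
    2 * #(F.blowup w).edgeFinset = ∑ a, w a * ∑ b ∈ F.neighborFinset a, w b := by
  rw [← sum_degrees_eq_twice_card_edges, ← univ_sigma_univ, sum_sigma]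
  simp only [degree_blowup, sum_const, card_univ, Fintype.card_fin, smul_eq_mul]

end SimpleGraph

open scoped Classical in
/-- If `F` is `k`-regular on `r` vertices and `H` is an `n`-vertex blow-up of `F`
whose vertex classes all have size at least `x` and satisfy `|N(Z)| ≤ s`, then
`e(H) ≤ ns/2 - x(rs - kn)/2`. -/
theorem stmt_3 {α : Type*} [Fintype α] (F : SimpleGraph α) (k r : ℕ)
    (hreg : F.IsRegularOfDegree k) (hr : Fintype.card α = r)
    (w : α → ℕ) (n s x : ℕ) (hn : n = ∑ a, w a)
    (hx : ∀ a, x ≤ w a)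
    (hs : ∀ a, ∑ b ∈ F.neighborFinset a, w b ≤ s) :
    (2 * (F.blowup w).edgeFinset.card : ℤ) ≤
      (n : ℤ) * s - (x : ℤ) * ((r : ℤ) * s - (k : ℤ) * n) := by
  have hdeg : ∑ a, ∑ b ∈ F.neighborFinset a, (w b : ℤ) = k * n := by
    rw [hreg.sum_sum_neighborFinset, hn, nsmul_eq_mul, Nat.cast_sum]
  have h := univ.sum_mul_le_sum_mul_sub (fun a => (w a : ℤ))
    (fun a => ∑ b ∈ F.neighborFinset a, (w b : ℤ)) (x := x) (c := s)
    (fun a _ => by exact_mod_cast hx a) (fun a _ => by exact_mod_cast hs a)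
  rw [hdeg, ← Nat.cast_sum, ← hn, card_univ, hr] at h
  have hedges : (2 * #(F.blowup w).edgeFinset : ℤ)
      = ∑ a, (w a : ℤ) * ∑ b ∈ F.neighborFinset a, (w b : ℤ) := by
    exact_mod_cast F.two_mul_card_edgeFinset_blowup w
  exact hedges ▸ h
end

section
/- For every integer k ≥ 2, every independent set of the Andrásfai graph Γ_k is contained in the neighbourhood of some vertex of Γ_k; in particular the independence number of Γ_k equals k. -/
/-!
The non-neighbours of a vertex `a` of `Γ_k` are the `2k - 1` vertices `a - (k - 1), …,
a + (k - 1)`, and the neighbours of `u - k` are the `k` vertices `u, …, u + (k - 1)`. Given an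
independent set `S ∋ a`, let `s₀` be the element of `S` that comes first in the window around `a`.
Every `t ∈ S` is `s₀ + d` with `0 ≤ d ≤ 2k - 2`, and independence rules out `d ≥ k`; so `S` lies
in the arc of length `k` starting at `s₀`, which is a neighbourhood. These arcs are themselves
independent and have `k` elements, which gives the independence number.
-/

open Finset

/-- The Andrásfai graph `Γ_k`: vertices `0, ..., 3k-2`, with `i` adjacent to `j`
iff the cyclic difference of `i` and `j` modulo `3k-1` lies in `{k, ..., 2k-1}`. -/
def andrasfai (k : ℕ) : SimpleGraph (Fin (3 * k - 1)) where
  Adj i j := i ≠ j ∧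
    ((i.val + (3 * k - 1) - j.val) % (3 * k - 1) ∈ Finset.Icc k (2 * k - 1) ∨
     (j.val + (3 * k - 1) - i.val) % (3 * k - 1) ∈ Finset.Icc k (2 * k - 1))
  symm := ⟨fun _ _ h => ⟨h.1.symm, h.2.symm⟩⟩
  loopless := ⟨fun _ h => h.1 rfl⟩

namespace Fin

variable {n : ℕ}

def arc (u : Fin n) (m : ℕ) : Finset (Fin n) := {x | (x - u).val < m}

theorem mem_arc {u x : Fin n} {m : ℕ} : x ∈ arc u m ↔ (x - u).val < m := by
  simp [arc]

theorem val_sub_add_val_sub {x y : Fin n} (h : x ≠ y) : (x - y).val + (y - x).val = n := by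
  rcases h.lt_or_gt with hxy | hxy
  · rw [coe_sub_iff_lt.2 hxy, coe_sub_iff_le.2 hxy.le]
    have := x.isLt; have : x.val < y.val := hxy; omega
  · rw [coe_sub_iff_le.2 hxy.le, coe_sub_iff_lt.2 hxy]
    have := y.isLt; have : y.val < x.val := hxy; omega

variable [NeZero n]

theorem val_sub_eq_of_val_sub_le {b s t : Fin n} (h : (s - b).val ≤ (t - b).val) :
    (t - s).val = (t - b).val - (s - b).val := by
  rw [← sub_sub_sub_cancel_right t s b]
  exact sub_val_of_le h

theorem card_arc_le (u : Fin n) (m : ℕ) : #(arc u m) ≤ m :=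
  calc #(arc u m)
      ≤ #(range m) := card_le_card_of_injOn (fun x => (x - u).val)
        (fun x hx => by simpa [mem_arc] using hx) (fun x _ y _ h => sub_left_injective (Fin.ext h))
    _ = m := card_range m

theorem card_arc_zero {m : ℕ} (hm : m ≤ n) : #(arc (0 : Fin n) m) = m := by
  simp [arc, card_filter_val_lt, hm]

end Fin

open Fin
open scoped Fin.NatCast

theorem andrasfai_adj_iff {k : ℕ} {x y : Fin (3 * k - 1)} :
    (andrasfai k).Adj x y ↔ k ≤ (x - y).val ∧ (x - y).val ≤ 2 * k - 1 := by
  have hval (a b : Fin (3 * k - 1)) :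
      (a.val + (3 * k - 1) - b.val) % (3 * k - 1) = (a - b).val := by
    rw [val_sub]
    congr 1
    omega
  simp only [andrasfai, hval, Finset.mem_Icc]
  constructor
  · rintro ⟨hne, h | h⟩
    · exact h
    · have := val_sub_add_val_sub hne
      omega
  · intro h
    refine ⟨fun hxy => ?_, Or.inl h⟩
    rw [hxy, val_sub, Nat.sub_add_cancel y.isLt.le, Nat.mod_self] at h
    omega

section

variable {k : ℕ} [NeZero (3 * k - 1)]

theorem mem_arc_of_not_andrasfai_adj {x y : Fin (3 * k - 1)} (h : ¬(andrasfai k).Adj x y) :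
    x ∈ arc (y - ((k - 1 : ℕ) : Fin _)) (2 * k - 1) := by
  have hk : 1 ≤ k := by have := NeZero.ne (3 * k - 1); omega
  have hxy := (x - y).isLt
  rw [andrasfai_adj_iff] at h
  rw [mem_arc, show x - (y - ((k - 1 : ℕ) : Fin _)) = x - y + ((k - 1 : ℕ) : Fin _) by abel,
    val_add, val_natCast, Nat.mod_eq_of_lt (a := k - 1) (by omega)]
  by_cases hsmall : (x - y).val < k
  · rw [Nat.mod_eq_of_lt (by omega)]
    omega
  · rw [Nat.mod_eq_sub_mod (by omega), Nat.mod_eq_of_lt (by omega)]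
    omega

theorem not_andrasfai_adj_of_mem_arc {u x y : Fin (3 * k - 1)} (hx : x ∈ arc u k)
    (hy : y ∈ arc u k) : ¬(andrasfai k).Adj x y := by
  rw [mem_arc] at hx hy
  rw [andrasfai_adj_iff, ← sub_sub_sub_cancel_right x y u]
  rcases le_or_gt (y - u) (x - u) with hle | hlt
  · rw [sub_val_of_le hle]
    omega
  · rw [coe_sub_iff_lt.2 hlt]
    have : (x - u).val < (y - u).val := hlt
    omega

theorem arc_subset_andrasfai_neighborSet (u : Fin (3 * k - 1)) :
    (arc u k : Set (Fin (3 * k - 1))) ⊆ (andrasfai k).neighborSet (u - ↑k) := by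
  intro x hx
  rw [mem_coe, mem_arc] at hx
  have hk : 1 ≤ k := by have := NeZero.ne (3 * k - 1); omega
  rw [SimpleGraph.mem_neighborSet, SimpleGraph.adj_comm, andrasfai_adj_iff,
    show x - (u - ↑k) = x - u + ↑k by abel, val_add, val_natCast,
    Nat.mod_eq_of_lt (a := k) (by omega), Nat.mod_eq_of_lt (by omega)]
  omega

theorem exists_subset_arc_of_andrasfai_isIndepSet {S : Set (Fin (3 * k - 1))}
    (hS : (andrasfai k).IsIndepSet S) : ∃ u : Fin (3 * k - 1), S ⊆ ↑(arc u k) := by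
  obtain rfl | ⟨a, ha⟩ := S.eq_empty_or_nonempty
  · exact ⟨0, Set.empty_subset _⟩
  have hnonadj : ∀ s ∈ S, ∀ t ∈ S, ¬(andrasfai k).Adj s t :=
    fun s hs t ht hst => hS hs ht hst.ne hst
  set b := a - ((k - 1 : ℕ) : Fin _)
  have hwindow : ∀ s ∈ S, (s - b).val < 2 * k - 1 := fun s hs =>
    mem_arc.1 (mem_arc_of_not_andrasfai_adj (hnonadj s hs a ha))
  obtain ⟨s₀, hs₀, hmin⟩ := S.exists_min_image (fun s => (s - b).val) S.toFinite ⟨a, ha⟩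
  refine ⟨s₀, fun t ht => mem_arc.2 ?_⟩
  have hdiff := val_sub_eq_of_val_sub_le (hmin t ht)
  have hnadj := andrasfai_adj_iff.not.1 (hnonadj t ht s₀ hs₀)
  have := hwindow t ht
  omega

end

/-- For k ≥ 2, every independent set of Γ_k is contained in the neighbourhood
of some vertex; in particular the independence number of Γ_k equals k. -/
theorem stmt_9 (k : ℕ) (hk : 2 ≤ k) :
    (∀ S : Set (Fin (3 * k - 1)),
        (∀ a ∈ S, ∀ b ∈ S, ¬ (andrasfai k).Adj a b) →
        ∃ v, S ⊆ (andrasfai k).neighborSet v) ∧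
      (∃ S : Finset (Fin (3 * k - 1)),
          (∀ a ∈ S, ∀ b ∈ S, ¬ (andrasfai k).Adj a b) ∧ S.card = k) ∧
      (∀ S : Finset (Fin (3 * k - 1)),
          (∀ a ∈ S, ∀ b ∈ S, ¬ (andrasfai k).Adj a b) → S.card ≤ k) := by
  have : NeZero (3 * k - 1) := ⟨by omega⟩
  have hcover : ∀ S : Set (Fin (3 * k - 1)), (∀ a ∈ S, ∀ b ∈ S, ¬(andrasfai k).Adj a b) →
      ∃ u : Fin (3 * k - 1), S ⊆ ↑(arc u k) := fun S hS =>
    exists_subset_arc_of_andrasfai_isIndepSet fun a ha b hb _ => hS a ha b hb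
  refine ⟨fun S hS => ?_, ⟨arc 0 k, fun a ha b hb => not_andrasfai_adj_of_mem_arc ha hb,
    card_arc_zero (by omega)⟩, fun S hS => ?_⟩
  · obtain ⟨u, hu⟩ := hcover S hS
    exact ⟨u - k, hu.trans (arc_subset_andrasfai_neighborSet u)⟩
  · obtain ⟨u, hu⟩ := hcover S hS
    exact (card_le_card (coe_subset.1 hu)).trans (card_arc_le u k)
end
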